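/- Let (g,γ) be a construction pair on an abelian group (X,+) and let m ≥ 1 be an integer with g^m = id. Then ∑_{0≤k<3m} g^k(x) ∈ rad γ for every x ∈ X. If moreover rad γ contains no element of (additive) order 3, then ∑_{0≤k<m} g^k(x) ∈ rad γ for every x ∈ X. -/

import Mathlib

/-- The radical of a symmetric mapping `γ : X × X → X`. -/
def radical {X : Type*} [AddCommGroup X] (γ : X → X → X) : Set X :=
  {x | ∀ y, γ x y = 0}

/-- A construction pair `(g, γ)` on an abelian group `(X, +)`. -/
structure IsConstructionPair {X : Type*} [AddCommGroup X]
    (g : Equiv.Perm X) (γ : X → X → X) : Prop where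
  symm : ∀ x y, γ x y = γ y x
  alt : ∀ x, γ x x = 0
  add_left : ∀ x y z, γ (x + y) z = γ x z + γ y z
  add_right : ∀ x y z, γ x (y + z) = γ x y + γ x z
  c1 : ∀ x y, g⁻¹ (g x + g y)
      = x + y + γ x y + g⁻¹ (γ x y) + g⁻¹ (g⁻¹ (γ x y))
  c2 : ∀ x y z, γ (γ x y) z = 0
  c3 : ∀ x y, g⁻¹ (γ x y) = γ (g x) y

/-
Condition (C1) says `g x + g y = g (x + y) + (c + g c + g⁻¹ c)` with `c = γ x y` in the radical,
and `g` is additive against radical elements. Iterating gives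
`gᵏ a + gᵏ b = gᵏ (a + b) + ∑_{t < 3k} g^(k - t) (γ a b)`, so `g^m = 1` forces
`∑_{t < 3m} g^(-t) (γ a b) = 0`; by (C3) the left side is `γ (∑_{t < 3m} gᵗ a) b`.
As `gᵗ a` is `m`-periodic in `t`, that orbit sum is `3 • ∑_{t < m} gᵗ a`, and `γ` of the latter
is a radical element killed by `3`.
-/

theorem Function.Periodic.sum_range_mul {M : Type*} [AddCommMonoid M] {f : ℕ → M} {m : ℕ}
    (hf : Function.Periodic f m) (n : ℕ) :
    ∑ k ∈ Finset.range (n * m), f k = n • ∑ k ∈ Finset.range m, f k := by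
  induction n with
  | zero => simp
  | succ n ih =>
    rw [add_mul, one_mul, Finset.sum_range_add, ih, succ_nsmul]
    congr 1
    exact Finset.sum_congr rfl fun k _ => by rw [add_comm]; simpa using hf.nat_mul n k

theorem Equiv.Perm.apply_zpow_apply {α : Type*} (σ : Equiv.Perm α) (n : ℤ) (x : α) :
    σ ((σ ^ n) x) = (σ ^ (n + 1)) x := by
  rw [add_comm, zpow_one_add, Equiv.Perm.mul_apply]

theorem Equiv.Perm.inv_apply_zpow_apply {α : Type*} (σ : Equiv.Perm α) (n : ℤ) (x : α) :
    σ⁻¹ ((σ ^ n) x) = (σ ^ (n - 1)) x := by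
  rw [sub_eq_neg_add, zpow_add, zpow_neg_one, Equiv.Perm.mul_apply]

namespace IsConstructionPair

variable {X : Type*} [AddCommGroup X] {g : Equiv.Perm X} {γ : X → X → X}
  (h : IsConstructionPair g γ)
include h

def gammaHom : X →+ X →+ X :=
  AddMonoidHom.mk' (fun x => AddMonoidHom.mk' (γ x) (h.add_right x))
    fun x y => AddMonoidHom.ext (h.add_left x y)

theorem gammaHom_apply (x y : X) : h.gammaHom x y = γ x y := rfl

def radicalSubgroup : AddSubgroup X :=
  h.gammaHom.ker.copy (radical γ) <| by
    ext x
    simp only [SetLike.mem_coe, AddMonoidHom.mem_ker, DFunLike.ext_iff, gammaHom_apply,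
      AddMonoidHom.zero_apply]
    rfl

theorem inv_apply_zero : g⁻¹ (0 : X) = 0 := by
  simpa only [h.alt, ← gammaHom_apply h, map_zero] using h.c3 0 0

theorem apply_zero : g (0 : X) = 0 :=
  (Equiv.Perm.inv_eq_iff_eq.mp h.inv_apply_zero).symm

theorem apply_mem_radical {u : X} (hu : u ∈ radical γ) : g u ∈ radical γ := fun y => by
  rw [← h.c3, hu y, h.inv_apply_zero]

theorem inv_apply_mem_radical {u : X} (hu : u ∈ radical γ) : g⁻¹ u ∈ radical γ := fun y => by
  have := h.c3 (g⁻¹ u) y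
  rwa [Equiv.Perm.coe_inv, Equiv.apply_symm_apply, hu y, ← Equiv.Perm.coe_inv,
    Equiv.Perm.inv_eq_iff_eq, h.apply_zero] at this

theorem zpow_apply_mem_radical {u : X} (hu : u ∈ radical γ) (n : ℤ) :
    (g ^ n) u ∈ radical γ := by
  induction n using Int.induction_on with
  | zero => exact hu
  | succ n ih => rw [← Equiv.Perm.apply_zpow_apply]; exact h.apply_mem_radical ih
  | pred n ih => rw [← Equiv.Perm.inv_apply_zpow_apply]; exact h.inv_apply_mem_radical ih

theorem gamma_pow_apply_left (k : ℕ) (x y : X) : γ ((g ^ k) x) y = (g ^ (-(k : ℤ))) (γ x y) := by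
  induction k with
  | zero => rfl
  | succ k ih =>
    rw [pow_succ', Equiv.Perm.mul_apply, ← h.c3, ih, Nat.cast_succ, neg_add_rev, zpow_add,
      zpow_neg_one, Equiv.Perm.mul_apply]

theorem map_add_of_gamma_eq_zero {x y : X} (hxy : γ x y = 0) : g (x + y) = g x + g y := by
  have := h.c1 x y
  rw [hxy, h.inv_apply_zero, h.inv_apply_zero, add_zero, add_zero, add_zero,
    Equiv.Perm.inv_eq_iff_eq] at this
  exact this.symm

theorem map_add_of_mem_radical (x : X) {u : X} (hu : u ∈ radical γ) : g (x + u) = g x + g u :=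
  h.map_add_of_gamma_eq_zero (by rw [h.symm]; exact hu x)

theorem map_sum_of_mem_radical {ι : Type*} (s : Finset ι) {f : ι → X}
    (hf : ∀ i ∈ s, f i ∈ radical γ) : g (∑ i ∈ s, f i) = ∑ i ∈ s, g (f i) := by
  induction s using Finset.cons_induction with
  | empty => exact h.apply_zero
  | cons a s ha ih =>
    rw [Finset.forall_mem_cons] at hf
    rw [Finset.sum_cons, Finset.sum_cons, h.map_add_of_mem_radical _
      (sum_mem (S := h.radicalSubgroup) hf.2), ih hf.2]

theorem apply_add_apply (x y : X) :
    g x + g y = g (x + y) + (γ x y + g (γ x y) + g⁻¹ (γ x y)) := by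
  have hc := h.c2 x y
  rw [Equiv.Perm.inv_eq_iff_eq.mp (h.c1 x y),
    h.map_add_of_mem_radical _ (h.inv_apply_mem_radical (h.inv_apply_mem_radical hc)),
    h.map_add_of_mem_radical _ (h.inv_apply_mem_radical hc), h.map_add_of_mem_radical _ hc]
  simp only [Equiv.Perm.coe_inv, Equiv.apply_symm_apply]
  abel

theorem pow_apply_add_pow_apply (a b : X) (k : ℕ) :
    (g ^ k) a + (g ^ k) b =
      (g ^ k) (a + b) + ∑ t ∈ Finset.range (3 * k), (g ^ ((k : ℤ) - t)) (γ a b) := by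
  induction k with
  | zero => simp
  | succ k ih =>
    set c := γ a b
    have hc : c ∈ radical γ := h.c2 a b
    have hR : ∑ t ∈ Finset.range (3 * k), (g ^ ((k : ℤ) - t)) c ∈ radical γ :=
      sum_mem (S := h.radicalSubgroup) fun t _ => h.zpow_apply_mem_radical hc _
    have hd : γ ((g ^ k) a) ((g ^ k) b) = (g ^ (-(2 * k : ℤ))) c := by
      rw [h.gamma_pow_apply_left, h.symm a, h.gamma_pow_apply_left, h.symm b,
        ← Equiv.Perm.mul_apply, ← zpow_add, neg_add_eq_sub, sub_eq_add_neg, two_mul, neg_add]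
    calc (g ^ (k + 1)) a + (g ^ (k + 1)) b = g ((g ^ k) a) + g ((g ^ k) b) := by
          simp only [pow_succ', Equiv.Perm.mul_apply]
      _ = g ((g ^ k) (a + b) + ∑ t ∈ Finset.range (3 * k), (g ^ ((k : ℤ) - t)) c) +
            ((g ^ (-(2 * k : ℤ))) c + g ((g ^ (-(2 * k : ℤ))) c) +
              g⁻¹ ((g ^ (-(2 * k : ℤ))) c)) := by
          rw [h.apply_add_apply, ih, hd]
      _ = (g ^ (k + 1)) (a + b) +
            ∑ t ∈ Finset.range (3 * (k + 1)), (g ^ ((↑(k + 1) : ℤ) - t)) c := by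
          rw [h.map_add_of_mem_radical _ hR,
            h.map_sum_of_mem_radical _ fun t _ => h.zpow_apply_mem_radical hc _,
            show 3 * (k + 1) = 3 * k + 1 + 1 + 1 by ring, Finset.sum_range_succ,
            Finset.sum_range_succ, Finset.sum_range_succ, pow_succ', Equiv.Perm.mul_apply]
          simp only [Equiv.Perm.apply_zpow_apply, Equiv.Perm.inv_apply_zpow_apply]
          push_cast
          ring_nf
          abel

theorem sum_zpow_neg_apply_gamma_eq_zero {m : ℕ} (hgm : g ^ m = 1) (a b : X) :
    ∑ t ∈ Finset.range (3 * m), (g ^ (-(t : ℤ))) (γ a b) = 0 := by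
  have key := h.pow_apply_add_pow_apply a b m
  have hzpow : ∀ t : ℕ, g ^ ((m : ℤ) - t) = g ^ (-(t : ℤ)) := fun t => by
    rw [sub_eq_add_neg, zpow_add, zpow_natCast, hgm, one_mul]
  simp only [hgm, Equiv.Perm.one_apply, hzpow] at key
  exact left_eq_add.mp key

theorem gamma_sum_pow_apply (n : ℕ) (x y : X) :
    γ (∑ t ∈ Finset.range n, (g ^ t) x) y = ∑ t ∈ Finset.range n, (g ^ (-(t : ℤ))) (γ x y) := by
  simp only [← gammaHom_apply h, map_sum, AddMonoidHom.finsetSum_apply]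
  simp only [gammaHom_apply, h.gamma_pow_apply_left]

theorem sum_range_three_mul_pow_apply_mem_radical {m : ℕ} (hgm : g ^ m = 1) (x : X) :
    ∑ t ∈ Finset.range (3 * m), (g ^ t) x ∈ radical γ := fun y => by
  rw [h.gamma_sum_pow_apply]
  exact h.sum_zpow_neg_apply_gamma_eq_zero hgm x y

theorem sum_range_pow_apply_mem_radical {m : ℕ} (hgm : g ^ m = 1)
    (h3 : ∀ z ∈ radical γ, 3 • z = 0 → z = 0) (x : X) :
    ∑ t ∈ Finset.range m, (g ^ t) x ∈ radical γ := fun y => by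
  have hper : Function.Periodic (fun t => (g ^ t) x) m := fun t => by
    simp only [pow_add, hgm, mul_one]
  refine h3 _ (h.c2 _ y) ?_
  rw [← gammaHom_apply h, ← AddMonoidHom.nsmul_apply, ← map_nsmul, ← hper.sum_range_mul]
  exact h.sum_range_three_mul_pow_apply_mem_radical hgm x y

end IsConstructionPair

theorem stmt_6_general {X : Type*} [AddCommGroup X] (g : Equiv.Perm X) (γ : X → X → X)
    (h : IsConstructionPair g γ) (m : ℕ) (hgm : g ^ m = 1) :
    (∀ x : X, ∑ k ∈ Finset.range (3 * m), (g ^ k) x ∈ radical γ) ∧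
    ((∀ z ∈ radical γ, 3 • z = 0 → z = 0) →
      ∀ x : X, ∑ k ∈ Finset.range m, (g ^ k) x ∈ radical γ) :=
  ⟨h.sum_range_three_mul_pow_apply_mem_radical hgm, h.sum_range_pow_apply_mem_radical hgm⟩

theorem stmt_6 {X : Type*} [AddCommGroup X] (g : Equiv.Perm X) (γ : X → X → X)
    (h : IsConstructionPair g γ) (m : ℕ) (hm : 1 ≤ m) (hgm : g ^ m = 1) :
    (∀ x : X, ∑ k ∈ Finset.range (3 * m), (g ^ k) x ∈ radical γ) ∧
    ((∀ z ∈ radical γ, 3 • z = 0 → z = 0) →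
      ∀ x : X, ∑ k ∈ Finset.range m, (g ^ k) x ∈ radical γ) :=
  stmt_6_general g γ h m hgm
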